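/- (Equation (22), existence of the generalized q-Euler sums) For every integer n ≥ 0, the sequence N ↦ ∑_{x=0}^{dp^N − 1} χ(x)(−1)^x [x]_q^n converges in ℤ_p; its limit is denoted G_n(χ, q) and equals (2/[2]_q)·E_{n,χ,q}, the normalized generalized q-Euler number attached to χ. -/
import Mathlib

/-- The `q`-analogue `[x]_q = 1 + q + ⋯ + q^(x-1)` in `ℤ_p`. -/
noncomputable def qnum {p : ℕ} [Fact p.Prime] (q : ℤ_[p]) (x : ℕ) : ℤ_[p] :=
  ∑ l ∈ Finset.range x, q ^ l

variable {p : ℕ} [Fact p.Prime]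

lemma qnum_add (q : ℤ_[p]) (a b : ℕ) :
    qnum q (a + b) = qnum q a + q ^ a * qnum q b := by
  unfold qnum
  rw [Finset.sum_range_add, Finset.mul_sum]
  simp [pow_add]

lemma qnum_mul (q : ℤ_[p]) (a b : ℕ) :
    qnum q (a * b) = qnum q a * qnum (q ^ a) b := by
  induction b with
  | zero => simp [qnum]
  | succ b ih =>
      rw [Nat.mul_succ, qnum_add, ih]
      unfold qnum
      rw [Finset.sum_range_succ]
      rw [← pow_mul]
      ring

lemma qnum_sub_natCast (q : ℤ_[p]) (hq : (p : ℤ_[p]) ∣ (q - 1)) (m : ℕ) :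
    (p : ℤ_[p]) ∣ qnum q m - m := by
  have : qnum q m - m = ∑ l ∈ Finset.range m, (q ^ l - 1) := by
    unfold qnum
    rw [Finset.sum_sub_distrib]
    simp
  rw [this]
  refine Finset.dvd_sum fun l _ => hq.trans ?_
  simpa using sub_dvd_pow_sub_pow q 1 l

lemma dvd_qnum_prime (Q : ℤ_[p]) (hQ : (p : ℤ_[p]) ∣ (Q - 1)) :
    (p : ℤ_[p]) ∣ qnum Q p := by
  have h := qnum_sub_natCast Q hQ p
  have : qnum Q p = (qnum Q p - p) + p := by ring
  rw [this]
  exact dvd_add h (dvd_refl _)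

lemma ppow_dvd_qnum_ppow (q : ℤ_[p]) (hq : (p : ℤ_[p]) ∣ (q - 1)) (N : ℕ) :
    (p : ℤ_[p]) ^ N ∣ qnum q (p ^ N) := by
  induction N with
  | zero => simp
  | succ N ih =>
      have h : p ^ (N + 1) = p ^ N * p := pow_succ p N
      rw [h, qnum_mul, pow_succ]
      refine mul_dvd_mul ih (dvd_qnum_prime _ ?_)
      refine hq.trans ?_
      simpa using sub_dvd_pow_sub_pow q 1 (p ^ N)

lemma ppow_dvd_qnum_ppow_mul (q : ℤ_[p]) (hq : (p : ℤ_[p]) ∣ (q - 1)) (N k : ℕ) :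
    (p : ℤ_[p]) ^ N ∣ qnum q (p ^ N * k) := by
  rw [qnum_mul]
  exact Dvd.dvd.mul_right (ppow_dvd_qnum_ppow q hq N) _

lemma sum_range_mul' {M : Type*} [AddCommMonoid M] (f : ℕ → M) (a b : ℕ) :
    ∑ x ∈ Finset.range (a * b), f x
      = ∑ j ∈ Finset.range b, ∑ y ∈ Finset.range a, f (j * a + y) := by
  induction b with
  | zero => simp
  | succ b ih =>
      rw [Nat.mul_succ, Finset.sum_range_add, ih, Finset.sum_range_succ]
      congr 1
      refine Finset.sum_congr rfl fun y _ => ?_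
      rw [mul_comm]

/-- **Equation (22).** For every `n ≥ 0`, the sequence
`N ↦ ∑_{x=0}^{dp^N−1} χ(x)(−1)^x [x]_q^n` converges in `ℤ_p`; its limit is
`G_n(χ,q) = (2/[2]_q)·E_{n,χ,q}`, the normalized generalized `q`-Euler number. -/
theorem eq22 (p : ℕ) [Fact p.Prime] (hp : Odd p)
    (q : ℤ_[p]) (hq : (p : ℤ_[p]) ∣ (q - 1))
    (d : ℕ) (hd : Odd d) (hdp : Nat.Coprime d p)
    (χ : DirichletCharacter ℤ_[p] d) (n : ℕ) :
    ∃ G : ℤ_[p],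
      Filter.Tendsto
        (fun N : ℕ => ∑ x ∈ Finset.range (d * p ^ N),
          χ (x : ZMod d) * (-1 : ℤ_[p]) ^ x * (qnum q x) ^ n)
        Filter.atTop (nhds G) := by
  set f : ℕ → ℤ_[p] := fun x => χ (x : ZMod d) * (-1 : ℤ_[p]) ^ x * (qnum q x) ^ n with hf
  set S : ℕ → ℤ_[p] := fun N => ∑ x ∈ Finset.range (d * p ^ N), f x with hS
  -- key divisibility
  have key : ∀ N : ℕ, (p : ℤ_[p]) ^ N ∣ S (N + 1) - S N := by
    intro N
    set m := d * p ^ N with hm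
    have hmodd : Odd m := hd.mul (hp.pow)
    have hsplit : S (N + 1) = ∑ j ∈ Finset.range p, ∑ y ∈ Finset.range m, f (j * m + y) := by
      have : d * p ^ (N + 1) = m * p := by rw [hm]; ring
      rw [hS]; simp only [this]
      exact sum_range_mul' f m p
    -- each term compared with (-1)^j * f y
    have hterm : ∀ j ∈ Finset.range p, ∀ y ∈ Finset.range m,
        (p : ℤ_[p]) ^ N ∣ f (j * m + y) - (-1 : ℤ_[p]) ^ j * f y := by
      intro j _ y _
      have hcast : ((j * m + y : ℕ) : ZMod d) = (y : ZMod d) := by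
        push_cast
        have : ((m : ZMod d)) = 0 := by
          rw [hm]; push_cast; simp
        rw [this]; ring
      have hsign : ((-1 : ℤ_[p])) ^ (j * m + y) = (-1) ^ j * (-1) ^ y := by
        rw [pow_add, pow_mul', hmodd.neg_one_pow]
      have hqnum : ∃ c : ℤ_[p], qnum q (j * m + y) = qnum q y + (p : ℤ_[p]) ^ N * c := by
        obtain ⟨c, hc⟩ := ppow_dvd_qnum_ppow_mul q hq N (d * j)
        refine ⟨q ^ y * c, ?_⟩
        have h1 : j * m + y = y + j * m := by ring
        have h2 : j * m = p ^ N * (d * j) := by rw [hm]; ring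
        rw [h1, qnum_add, h2, hc]; ring
      obtain ⟨c, hc⟩ := hqnum
      have hpow : (p : ℤ_[p]) ^ N ∣ (qnum q (j * m + y)) ^ n - (qnum q y) ^ n := by
        have := sub_dvd_pow_sub_pow (qnum q (j * m + y)) (qnum q y) n
        refine Dvd.dvd.trans ?_ this
        rw [hc]; exact ⟨c, by ring⟩
      have : f (j * m + y) - (-1 : ℤ_[p]) ^ j * f y
          = χ (y : ZMod d) * ((-1) ^ j * (-1) ^ y)
            * ((qnum q (j * m + y)) ^ n - (qnum q y) ^ n) := by
        rw [hf]
        simp only [hcast, hsign]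
        ring
      rw [this]
      exact Dvd.dvd.mul_left hpow _
    have hsum1 : (p : ℤ_[p]) ^ N ∣
        S (N + 1) - ∑ j ∈ Finset.range p, (-1 : ℤ_[p]) ^ j * S N := by
      rw [hsplit, hS]
      have : (∑ j ∈ Finset.range p, ∑ y ∈ Finset.range m, f (j * m + y))
          - ∑ j ∈ Finset.range p, (-1 : ℤ_[p]) ^ j * ∑ y ∈ Finset.range m, f y
          = ∑ j ∈ Finset.range p, ∑ y ∈ Finset.range m,
              (f (j * m + y) - (-1 : ℤ_[p]) ^ j * f y) := by
        rw [← Finset.sum_sub_distrib]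
        refine Finset.sum_congr rfl fun j _ => ?_
        rw [Finset.mul_sum, ← Finset.sum_sub_distrib]
      rw [this]
      exact Finset.dvd_sum fun j hj => Finset.dvd_sum fun y hy => hterm j hj y hy
    have hgeom : (∑ j ∈ Finset.range p, (-1 : ℤ_[p]) ^ j) = 1 := by
      rw [neg_one_geom_sum, if_neg (Nat.not_even_iff_odd.mpr hp)]
    have : S (N + 1) - S N = S (N + 1) - ∑ j ∈ Finset.range p, (-1 : ℤ_[p]) ^ j * S N := by
      rw [← Finset.sum_mul, hgeom, one_mul]
    rw [this]
    exact hsum1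
  -- Cauchy
  have hcauchy : CauchySeq S := by
    refine cauchySeq_of_le_geometric ((p : ℝ))⁻¹ 1 ?_ ?_
    · rw [inv_lt_one_iff₀]
      right
      exact_mod_cast (Fact.out : p.Prime).one_lt
    · intro N
      rw [dist_eq_norm, one_mul, norm_sub_rev]
      have := ((S (N + 1) - S N).norm_le_pow_iff_mem_span_pow N).mpr
        (Ideal.mem_span_singleton.mpr ?_)
      · calc ‖S (N + 1) - S N‖ ≤ (p : ℝ) ^ (-(N : ℤ)) := this
          _ = ((p : ℝ))⁻¹ ^ N := by
            rw [zpow_neg, zpow_natCast, inv_pow]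
      · exact key N
  obtain ⟨G, hG⟩ := cauchySeq_tendsto_of_complete hcauchy
  exact ⟨G, hG⟩
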